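/- arXiv:1203.3727 — 4 statements merged into one kernel-verified Lean document; each statement's English description precedes it below -/
import Mathlib

section
/- Let R_ρ be an ordered instance of r-Dense Feedback Arc Set on V = {1,…,n} with ranking ρ, and for each v let In(v) be the number of r-subsets in which v is the selected vertex, l_ρ(v) the number of r-subsets whose σ-maximum under ρ is v (left constraints of v), and b_ρ the number of constraints inconsistent with ρ. Then 2·b_ρ ≥ Σ_{v∈V} |l_ρ(v) − In(v)|. -/
/-- In a dense `r`-FAST instance on `Fin n`, the constraint on `S` is satisfied by the
ranking `ρ` iff the selected vertex `sel S` is `ρ`-last in `S`. -/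
def fastSat {n : ℕ} (sel : Finset (Fin n) → Fin n) (S : Finset (Fin n))
    (ρ : Equiv.Perm (Fin n)) : Prop :=
  ∀ u ∈ S, u ≠ sel S → ρ u < ρ (sel S)

/-- `l_ρ(v)`: the number of `r`-subsets (left constraints) whose `ρ`-maximum is `v`. -/
noncomputable def lCount (n r : ℕ) (ρ : Equiv.Perm (Fin n)) (v : Fin n) : ℕ :=
  {S : Finset (Fin n) | S.card = r ∧ v ∈ S ∧ ∀ u ∈ S, u ≠ v → ρ u < ρ v}.ncard

/-- `In(v)`: the in-degree of `v`, i.e. the number of constraints where `v` is selected. -/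
noncomputable def inDeg (n r : ℕ) (sel : Finset (Fin n) → Fin n) (v : Fin n) : ℕ :=
  {S : Finset (Fin n) | S.card = r ∧ sel S = v}.ncard

/-- `b_ρ`: the number of constraints inconsistent with `ρ`. -/
noncomputable def badCount (n r : ℕ) (sel : Finset (Fin n) → Fin n) (ρ : Equiv.Perm (Fin n)) : ℕ :=
  {S : Finset (Fin n) | S.card = r ∧ ¬ fastSat sel S ρ}.ncard

/-! A constraint satisfied by `ρ` is a left constraint of `v` exactly when `v` is its selected
vertex, so satisfied constraints contribute equally to `l_ρ(v)` and `In(v)`, and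
`|l_ρ(v) - In(v)|` is at most the number of violated constraints that are left constraints of `v`
plus the number of violated constraints selecting `v`. Summed over `v`, each of these two counts is
at most `b_ρ`, since a constraint has at most one `ρ`-last vertex and one selected vertex. -/

open Finset

theorem Set.ncard_setOf_eq_card_filter {α : Type*} [Fintype α] (p : α → Prop) [DecidablePred p] :
    {x | p x}.ncard = #{x | p x} := by
  rw [← Finset.coe_filter_univ, Set.ncard_coe_finset]

namespace Finset

variable {β : Type*} {s : Finset β} {p q g : β → Prop} [DecidablePred p] [DecidablePred q]
  [DecidablePred g]

theorem abs_card_filter_sub_card_filter_le (h : ∀ x ∈ s, g x → (p x ↔ q x)) :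
    |(#{x ∈ s | p x} : ℤ) - #{x ∈ s | q x}| ≤
      #{x ∈ {x ∈ s | ¬g x} | p x} + #{x ∈ {x ∈ s | ¬g x} | q x} := by
  have split : ∀ (t : β → Prop) [DecidablePred t],
      #{x ∈ s | t x} = #{x ∈ s | g x ∧ t x} + #{x ∈ {x ∈ s | ¬g x} | t x} := by
    intro t _
    rw [← card_filter_add_card_filter_not (s := {x ∈ s | t x}) g]
    simp only [filter_filter, and_comm]
  have agree : #{x ∈ s | g x ∧ p x} = #{x ∈ s | g x ∧ q x} :=
    congrArg card <| filter_congr fun x hx => and_congr_right (h x hx)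
  rw [split p, split q, agree, abs_sub_le_iff]
  push_cast
  constructor <;> linarith

theorem sum_card_filter_le_card {ι : Type*} [Fintype ι] (P : ι → β → Prop)
    [∀ i, DecidablePred (P i)] (h : ∀ x ∈ s, ∀ i j, P i x → P j x → i = j) :
    ∑ i, #{x ∈ s | P i x} ≤ #s := by
  classical
  have disj : ((univ : Finset ι) : Set ι).PairwiseDisjoint fun i => {x ∈ s | P i x} := by
    intro i _ j _ hij
    exact disjoint_filter.2 fun x hx hi hj => hij (h x hx i j hi hj)
  rw [← card_biUnion disj]
  exact card_le_card (biUnion_subset.2 fun _ _ => filter_subset _ _)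

end Finset

def IsLastIn {α β : Type*} [LT β] (f : α → β) (S : Finset α) (v : α) : Prop :=
  v ∈ S ∧ ∀ u ∈ S, u ≠ v → f u < f v

theorem IsLastIn.eq {α β : Type*} [Preorder β] {f : α → β} {S : Finset α} {v w : α}
    (hv : IsLastIn f S v) (hw : IsLastIn f S w) : v = w := by
  by_contra hne
  exact lt_asymm (hv.2 w hw.1 (Ne.symm hne)) (hw.2 v hv.1 hne)

section FAST

variable {n : ℕ} (r : ℕ) (sel : Finset (Fin n) → Fin n) (ρ : Equiv.Perm (Fin n))

theorem isLastIn_iff_sel_eq_of_fastSat {S : Finset (Fin n)} (hmem : sel S ∈ S)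
    (hS : fastSat sel S ρ) {v : Fin n} : IsLastIn ρ S v ↔ sel S = v :=
  ⟨(IsLastIn.eq ⟨hmem, hS⟩ ·), fun h => h ▸ ⟨hmem, hS⟩⟩

open Classical in
theorem lCount_eq_card (v : Fin n) :
    lCount n r ρ v = #{S ∈ ({S | S.card = r} : Finset (Finset (Fin n))) | IsLastIn ρ S v} := by
  rw [lCount, Set.ncard_setOf_eq_card_filter, filter_filter]
  congr

theorem inDeg_eq_card (v : Fin n) :
    inDeg n r sel v = #{S ∈ ({S | S.card = r} : Finset (Finset (Fin n))) | sel S = v} := by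
  rw [inDeg, Set.ncard_setOf_eq_card_filter, filter_filter]

open Classical in
theorem badCount_eq_card :
    badCount n r sel ρ =
      #{S ∈ ({S | S.card = r} : Finset (Finset (Fin n))) | ¬fastSat sel S ρ} := by
  rw [badCount, Set.ncard_setOf_eq_card_filter, filter_filter]

end FAST

theorem two_bad_ge_sum_abs_general
    {n r : ℕ}
    (sel : Finset (Fin n) → Fin n)
    (hsel : ∀ S : Finset (Fin n), S.card = r → sel S ∈ S)
    (ρ : Equiv.Perm (Fin n)) :
    ∑ v : Fin n, |(lCount n r ρ v : ℤ) - (inDeg n r sel v : ℤ)| ≤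
      2 * (badCount n r sel ρ : ℤ) := by
  classical
  set bad : Finset (Finset (Fin n)) := {S ∈ ({S | S.card = r} : Finset _) | ¬fastSat sel S ρ}
  have per_vertex (v : Fin n) : |(lCount n r ρ v : ℤ) - inDeg n r sel v| ≤
      #{S ∈ bad | IsLastIn ρ S v} + #{S ∈ bad | sel S = v} := by
    rw [lCount_eq_card, inDeg_eq_card]
    exact abs_card_filter_sub_card_filter_le fun S hS hsat =>
      isLastIn_iff_sel_eq_of_fastSat sel ρ (hsel S (mem_filter.1 hS).2) hsat
  have last_le := sum_card_filter_le_card (s := bad) (fun v S => IsLastIn ρ S v)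
    fun _ _ _ _ => IsLastIn.eq
  have sel_le := sum_card_filter_le_card (s := bad) (fun v S => sel S = v)
    fun _ _ _ _ hv hw => hv.symm.trans hw
  calc ∑ v, |(lCount n r ρ v : ℤ) - inDeg n r sel v|
      ≤ ∑ v, ((#{S ∈ bad | IsLastIn ρ S v} : ℤ) + #{S ∈ bad | sel S = v}) :=
        sum_le_sum fun v _ => per_vertex v
    _ ≤ #bad + #bad := by
        rw [sum_add_distrib]
        exact_mod_cast add_le_add last_le sel_le
    _ = 2 * (badCount n r sel ρ : ℤ) := by
        rw [badCount_eq_card]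
        ring

/-- For any ranking `ρ` of a dense `r`-FAST instance, `2·b_ρ ≥ Σ_v |l_ρ(v) − In(v)|`. -/
theorem two_bad_ge_sum_abs
    {n r : ℕ} (hr : 2 ≤ r)
    (sel : Finset (Fin n) → Fin n)
    (hsel : ∀ S : Finset (Fin n), S.card = r → sel S ∈ S)
    (ρ : Equiv.Perm (Fin n)) :
    ∑ v : Fin n, |(lCount n r ρ v : ℤ) - (inDeg n r sel v : ℤ)| ≤
      2 * (badCount n r sel ρ : ℤ) :=
  two_bad_ge_sum_abs_general sel hsel ρ
end

section
/- Let R be a dense instance of r-Dense Feedback Arc Set on V = {1,…,n}, In(v) the in-degree of v (number of constraints where v is selected), and for a ranking ρ let l_ρ(v) = C(ρ(v)−1, r−1). If σ_A is any ranking ordering vertices by non-decreasing in-degree, then for every ranking ρ, Σ_{v∈V} |l_ρ(v) − In(v)| ≥ Σ_{v∈V} |l_{σ_A}(v) − In(v)|. -/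
/-!
Writing `|x - y| = x + y - 2 min x y`, and noting that `∑ v, l_ρ(v)` does not depend on `ρ`,
the claim is a rearrangement inequality for `min`. Slicing at each threshold `t`,
`min x y = ∑ₜ [t < x] [t < y]`, reduces it to the classical rearrangement inequality for the
monovarying `0/1` sequences `[t < l(v)]` and `[t < In(v)]`.
-/

open Finset Equiv

theorem Nat.min_eq_sum_range_ite_mul_ite {x y M : ℕ} (hy : y ≤ M) :
    min x y = ∑ t ∈ range M, (if t < x then 1 else 0) * (if t < y then 1 else 0) := by
  simp_rw [mul_ite, mul_one, mul_zero, ← ite_and, sum_boole, Nat.cast_id]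
  rw [← card_range (min x y)]
  congr 1
  ext t
  simp only [mem_filter, mem_range]
  omega

theorem Monovary.ite_lt {ι : Type*} {f g : ι → ℕ} (hfg : Monovary f g) (t : ℕ) :
    Monovary (fun i => if t < f i then 1 else 0 : ι → ℕ) (fun i => if t < g i then 1 else 0) := by
  intro i j hij
  dsimp only at hij ⊢
  have hg : g i < g j := by split_ifs at hij <;> omega
  have hf := hfg hg
  split_ifs <;> omega

theorem Monovary.sum_min_comp_perm_le_sum_min {ι : Type*} [Fintype ι] {f g : ι → ℕ}
    (hfg : Monovary f g) (σ : Perm ι) :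
    ∑ i, min (f (σ i)) (g i) ≤ ∑ i, min (f i) (g i) := by
  have hg : ∀ i, g i ≤ ∑ j, g j := fun i => single_le_sum (by simp) (mem_univ i)
  simp_rw [Nat.min_eq_sum_range_ite_mul_ite (hg _)]
  rw [sum_comm, sum_comm (s := (univ : Finset ι))]
  exact sum_le_sum fun t _ => (hfg.ite_lt t).sum_comp_perm_mul_le_sum_mul

theorem Monovary.sum_abs_sub_le_sum_abs_comp_perm_sub {ι : Type*} [Fintype ι] {f g : ι → ℕ}
    (hfg : Monovary f g) (σ : Perm ι) :
    ∑ i, |(f i : ℤ) - g i| ≤ ∑ i, |(f (σ i) : ℤ) - g i| := by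
  have habs : ∀ x y : ℕ, |(x : ℤ) - y| = x + y - 2 * (min x y : ℕ) := fun x y => by
    rw [← max_sub_min_eq_abs]; push_cast; omega
  have hmin : (∑ i, min (f (σ i)) (g i) : ℕ) ≤ ∑ i, min (f i) (g i) :=
    hfg.sum_min_comp_perm_le_sum_min σ
  have hperm : ∑ i, (f (σ i) : ℤ) = ∑ i, (f i : ℤ) := Equiv.sum_comp σ fun i => (f i : ℤ)
  simp only [habs, sum_sub_distrib, sum_add_distrib, ← mul_sum]
  push_cast at hmin ⊢
  linarith

theorem incdegree_minimizes_sum_general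
    {n r : ℕ}
    (sel : Finset (Fin n) → Fin n)
    (σA : Equiv.Perm (Fin n))
    (hA : ∀ u v : Fin n, σA u < σA v → inDeg n r sel u ≤ inDeg n r sel v)
    (ρ : Equiv.Perm (Fin n)) :
    ∑ v : Fin n, |((σA v : ℕ).choose (r - 1) : ℤ) - (inDeg n r sel v : ℤ)| ≤
      ∑ v : Fin n, |((ρ v : ℕ).choose (r - 1) : ℤ) - (inDeg n r sel v : ℤ)| := by
  have hmono : Monovary (fun v => (σA v : ℕ).choose (r - 1)) (inDeg n r sel) := by
    intro u v huv
    exact Nat.choose_le_choose _ (not_lt.mp fun hvu => (hA v u hvu).not_gt huv)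
  simpa using hmono.sum_abs_sub_le_sum_abs_comp_perm_sub (ρ.trans σA.symm)

/-- On a dense `r`-FAST instance, `l_ρ(v) = C(ρ(v)−1, r−1)` (with 0-based positions,
`C(ρ(v), r−1)`). If `σ_A` orders the vertices by non-decreasing in-degree, then for every
ranking `ρ`, `Σ_v |l_ρ(v) − In(v)| ≥ Σ_v |l_{σ_A}(v) − In(v)|`. -/
theorem incdegree_minimizes_sum
    {n r : ℕ} (hr : 2 ≤ r)
    (sel : Finset (Fin n) → Fin n)
    (hsel : ∀ S : Finset (Fin n), S.card = r → sel S ∈ S)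
    (σA : Equiv.Perm (Fin n))
    (hA : ∀ u v : Fin n, σA u < σA v → inDeg n r sel u ≤ inDeg n r sel v)
    (ρ : Equiv.Perm (Fin n)) :
    ∑ v : Fin n, |((σA v : ℕ).choose (r - 1) : ℤ) - (inDeg n r sel v : ℤ)| ≤
      ∑ v : Fin n, |((ρ v : ℕ).choose (r - 1) : ℤ) - (inDeg n r sel v : ℤ)| :=
  incdegree_minimizes_sum_general sel σA hA ρ
end

section
/- For rankings ρ, γ of V = {1,…,n} and any r ≥ 2, Σ_{v∈V} |C(ρ(v)−1, r−1) − C(γ(v)−1, r−1)| ≥ K(ρ, γ), where K(ρ, γ) is the number of r-subsets S of V such that S is satisfied by exactly one of ρ and γ in a dense r-Dense Feedback Arc Set instance. -/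
/-- The Kendall-Tau-like distance `K(ρ,γ)`: the number of `r`-subsets satisfied by
exactly one of the two rankings `ρ` and `γ`. -/
noncomputable def kendall (n r : ℕ) (sel : Finset (Fin n) → Fin n)
    (ρ γ : Equiv.Perm (Fin n)) : ℕ :=
  {S : Finset (Fin n) | S.card = r ∧ ¬ (fastSat sel S ρ ↔ fastSat sel S γ)}.ncard

open Finset Equiv

lemma sub_le_sub_of_monotone_increments {f : ℕ → ℤ} (hf' : Monotone fun a => f (a + 1) - f a)
    {a b : ℕ} (hab : a ≤ b) (d : ℕ) : f (a + d) - f a ≤ f (b + d) - f b := by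
  induction d with
  | zero => simp
  | succ d ih =>
    have := hf' (Nat.add_le_add_right hab d)
    simp only [← add_assoc] at this ⊢
    linarith

lemma Fin.sum_Ioo_sub_le {n : ℕ} {f : ℕ → ℤ} (hf : Monotone f) {i j : Fin n} (hij : i ≤ j) :
    ∑ t ∈ Ioo i j, (f (t + 1) - f t) ≤ f j - f i := by
  calc ∑ t ∈ Ioo i j, (f (t + 1) - f t) = ∑ m ∈ Ioo (i : ℕ) j, (f (m + 1) - f m) := by
        rw [← Fin.map_valEmbedding_Ioo, sum_map]; rfl
    _ ≤ ∑ m ∈ Ico (i : ℕ) j, (f (m + 1) - f m) :=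
        sum_le_sum_of_subset_of_nonneg Ioo_subset_Ico_self fun m _ _ => sub_nonneg.2 (hf m.le_succ)
    _ = f j - f i := sum_Ico_sub f hij

lemma Nat.monotone_choose_succ_sub (k : ℕ) :
    Monotone fun a : ℕ => ((a + 1).choose k : ℤ) - a.choose k := by
  cases k with
  | zero => simp [monotone_const]
  | succ k =>
    intro a b hab
    simp only [Nat.choose_succ_succ', Nat.cast_add, add_sub_cancel_right]
    exact_mod_cast Nat.choose_le_choose k hab

namespace Equiv.Perm

variable {n : ℕ} (f : ℕ → ℤ)

def numBelowBoth (ρ γ : Perm (Fin n)) (x : Fin n) : ℕ := #{u | ρ u < ρ x ∧ γ u < γ x}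

lemma card_filter_apply_lt (ρ : Perm (Fin n)) (a : Fin n) : #{u | ρ u < a} = a := by
  rw [← Fin.card_Iio a]
  exact card_equiv ρ (by simp)

lemma numBelowBoth_le (ρ γ : Perm (Fin n)) (x : Fin n) : numBelowBoth ρ γ x ≤ ρ x :=
  (card_le_card fun u => by simp +contextual).trans_eq (card_filter_apply_lt ρ _)

lemma numBelowBoth_self (ρ : Perm (Fin n)) (x : Fin n) : numBelowBoth ρ ρ x = ρ x := by
  simp only [numBelowBoth, and_self, card_filter_apply_lt]

lemma numBelowBoth_mul_right (ρ γ τ : Perm (Fin n)) (x : Fin n) :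
    numBelowBoth (ρ * τ) (γ * τ) x = numBelowBoth ρ γ (τ x) :=
  card_equiv τ fun _ => by simp only [mem_filter]; simp

lemma numBelowBoth_one_mul_swap (σ : Perm (Fin n)) (i j t : Fin n) :
    numBelowBoth 1 (σ * swap i j) t = #{u | swap i j u < t ∧ σ u < σ (swap i j t)} := by
  rw [← swap_mul_self i j, numBelowBoth_mul_right, numBelowBoth]
  simp

lemma swap_apply_lt_iff {α : Type*} [LinearOrder α] {i j t : α} (h : i < t ↔ j < t) (u : α) :
    swap i j u < t ↔ u < t := by
  rcases eq_or_ne u i with rfl | hi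
  · simp [h]
  rcases eq_or_ne u j with rfl | hj
  · simp [h]
  rw [swap_apply_of_ne_of_ne hi hj]

lemma exists_apply_lt_self_of_ne_one {σ : Perm (Fin n)} (hσ : σ ≠ 1) : ∃ t, σ t < t := by
  by_contra! h
  have hsum : ∑ t : Fin n, (t : ℕ) = ∑ t, (σ t : ℕ) := (Equiv.sum_comp σ _).symm
  have := (sum_eq_sum_iff_of_le (f := fun t : Fin n => (t : ℕ)) fun t _ => h t).1 hsum
  exact hσ (Equiv.ext fun t => (Fin.ext (this t (mem_univ t))).symm)

lemma exists_crossing_pair {σ : Perm (Fin n)} (hσ : σ ≠ 1) :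
    ∃ i j, i < j ∧ σ j ≤ i ∧ j ≤ σ i := by
  obtain ⟨j, hj : σ j < j, hmin⟩ :=
    wellFounded_lt.has_min {t | σ t < t} (exists_apply_lt_self_of_ne_one hσ)
  -- `σ` moves no point of `[σ j, j)` down, so if it sent none of them to `≥ j` it would inject
  -- `[σ j, j)` into `(σ j, j)`.
  by_contra! h
  have hmaps : Set.MapsTo σ (Ico (σ j) j) (Ioo (σ j) j) := by
    intro s hs
    simp only [coe_Ico, coe_Ioo, Set.mem_Ico, Set.mem_Ioo] at hs ⊢
    have hs' : s ≤ σ s := not_lt.1 fun h' => hmin s h' hs.2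
    have hne : σ s ≠ σ j := σ.injective.ne hs.2.ne
    exact ⟨lt_of_le_of_ne (hs.1.trans hs') hne.symm, h s j hs.2 hs.1⟩
  have := card_le_card_of_injOn σ hmaps σ.injective.injOn
  simp only [Fin.card_Ico, Fin.card_Ioo] at this
  omega

section CrossingSwap

variable {σ : Perm (Fin n)} {i j : Fin n}

lemma numBelowBoth_one_mul_swap_of_lt_or_lt {t : Fin n} (hij : i < j) (ht : t < i ∨ j < t) :
    numBelowBoth 1 (σ * swap i j) t = numBelowBoth 1 σ t := by
  have hiff : i < t ↔ j < t := by
    rcases ht with ht | ht <;> constructor <;> intro h <;> order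
  have hti : t ≠ i := by rintro rfl; rcases ht with ht | ht <;> order
  have htj : t ≠ j := by rintro rfl; rcases ht with ht | ht <;> order
  rw [numBelowBoth_one_mul_swap, swap_apply_of_ne_of_ne hti htj]
  simp only [swap_apply_lt_iff hiff]
  rfl

lemma numBelowBoth_one_mul_swap_le_succ {t : Fin n} (hit : i < t) (htj : t < j) :
    numBelowBoth 1 (σ * swap i j) t ≤ numBelowBoth 1 σ t + 1 := by
  rw [numBelowBoth_one_mul_swap, swap_apply_of_ne_of_ne hit.ne' htj.ne]
  refine (card_le_card fun u hu => ?_).trans (card_insert_le j _)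
  simp only [mem_filter, mem_univ, true_and, mem_insert] at hu ⊢
  rw [swap_apply_def] at hu
  split_ifs at hu with h₁ h₂
  · order
  · exact .inl h₂
  · exact .inr hu

lemma numBelowBoth_one_mul_swap_left_le (hij : i < j) :
    numBelowBoth 1 (σ * swap i j) i ≤ numBelowBoth 1 σ j := by
  rw [numBelowBoth_one_mul_swap, swap_apply_left]
  refine card_le_card fun u hu => ?_
  simp only [mem_filter, mem_univ, true_and] at hu ⊢
  rw [swap_apply_def] at hu
  split_ifs at hu with h₁ h₂
  · order
  · order
  · exact ⟨hu.1.trans hij, hu.2⟩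

lemma numBelowBoth_one_mul_swap_right_le (hij : i < j) :
    numBelowBoth 1 (σ * swap i j) j ≤ numBelowBoth 1 σ i + (j - i) := by
  rw [numBelowBoth_one_mul_swap, swap_apply_right, ← Fin.card_Ioc]
  refine (card_le_card fun u hu => ?_).trans (card_union_le _ _)
  simp only [mem_filter, mem_univ, true_and, mem_union, mem_Ioc] at hu ⊢
  rw [swap_apply_def] at hu
  split_ifs at hu with h₁ h₂
  · order
  · exact .inr ⟨h₂ ▸ hij, h₂.le⟩
  · rcases lt_or_gt_of_ne h₁ with h | h
    · exact .inl ⟨h, hu.2⟩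
    · exact .inr ⟨h, hu.1.le⟩

lemma sum_abs_sub_mul_swap (hf : Monotone f) (hij : i < j) (hj : σ j ≤ i) (hi : j ≤ σ i) :
    ∑ t : Fin n, |f t - f (σ t)| =
      ∑ t : Fin n, |f t - f ((σ * swap i j) t)| + 2 * (f j - f i) := by
  rw [← sub_eq_iff_eq_add', ← sum_sub_distrib, Fintype.sum_eq_add i j hij.ne fun t ht => by
    simp [swap_apply_of_ne_of_ne ht.1 ht.2]]
  simp only [Perm.mul_apply, swap_apply_left, swap_apply_right]
  rw [abs_of_nonpos (sub_nonpos.2 (hf (hij.le.trans hi))), abs_of_nonneg (sub_nonneg.2 (hf hj)),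
    abs_of_nonneg (sub_nonneg.2 (hf (hj.trans hij.le))), abs_of_nonpos (sub_nonpos.2 (hf hi))]
  ring

lemma sum_sub_numBelowBoth_le_mul_swap (hf : Monotone f)
    (hf' : Monotone fun a => f (a + 1) - f a) (hij : i < j) :
    ∑ t : Fin n, (f t - f (numBelowBoth 1 σ t)) ≤
      ∑ t : Fin n, (f t - f (numBelowBoth 1 (σ * swap i j) t)) + 2 * (f j - f i) := by
  set e := numBelowBoth 1 σ
  set e' := numBelowBoth 1 (σ * swap i j)
  have he (t : Fin n) : e t ≤ t := numBelowBoth_le 1 σ t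
  have hends : f (e' i) - f (e i) + (f (e' j) - f (e j)) ≤ f j - f i := by
    have h₁ : f (e' i) ≤ f (e j) := hf (numBelowBoth_one_mul_swap_left_le hij)
    have h₂ : f (e' j) ≤ f (e i + (j - i)) := hf (numBelowBoth_one_mul_swap_right_le hij)
    have h₃ := sub_le_sub_of_monotone_increments hf' (he i) (j - i)
    rw [Nat.add_sub_cancel' (Fin.le_def.1 hij.le)] at h₃
    linarith
  have hmid : ∀ t ∈ Ioo i j, f (e' t) - f (e t) ≤ f (t + 1) - f t := fun t ht =>
    have ht := mem_Ioo.1 ht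
    (sub_le_sub_right (hf (numBelowBoth_one_mul_swap_le_succ ht.1 ht.2)) _).trans (hf' (he t))
  have hout : ∀ t ∈ univ, t ∉ Icc i j → f (e' t) - f (e t) = 0 := fun t _ ht => by
    rw [mem_Icc, not_and_or, not_le, not_le] at ht
    simp only [e, e', numBelowBoth_one_mul_swap_of_lt_or_lt hij ht, sub_self]
  have : ∑ t, (f (e' t) - f (e t)) ≤ 2 * (f j - f i) := by
    rw [← sum_subset (subset_univ _) hout, Icc_eq_cons_Ioc hij.le, sum_cons, Ioc_eq_cons_Ioo hij,
      sum_cons]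
    linarith [sum_le_sum hmid, Fin.sum_Ioo_sub_le hf hij.le]
  simp only [sum_sub_distrib] at this ⊢
  linarith

end CrossingSwap

theorem sum_sub_numBelowBoth_one_le (hf : Monotone f) (hf' : Monotone fun a => f (a + 1) - f a)
    (σ : Perm (Fin n)) :
    ∑ t : Fin n, (f t - f (numBelowBoth 1 σ t)) ≤ ∑ t : Fin n, |f t - f (σ t)| := by
  by_cases hσ : σ = 1
  · simp [hσ, numBelowBoth_self]
  obtain ⟨i, j, hij, hj, hi⟩ := exists_crossing_pair hσ
  have := sum_sub_numBelowBoth_one_le hf hf' (σ * swap i j)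
  linarith [sum_abs_sub_mul_swap f hf hij hj hi,
    sum_sub_numBelowBoth_le_mul_swap f (σ := σ) hf hf' hij]
termination_by (∑ t : Fin n, |(t : ℤ) - (σ t : ℕ)|).toNat
decreasing_by
  have := sum_abs_sub_mul_swap (fun m : ℕ => (m : ℤ)) Nat.mono_cast hij hj hi
  have : 0 ≤ ∑ t : Fin n, |(t : ℤ) - ((σ * swap i j) t : ℕ)| := by positivity
  have : (i : ℤ) < j := by exact_mod_cast hij
  omega

theorem sum_sub_numBelowBoth_le_sum_abs (hf : Monotone f)
    (hf' : Monotone fun a => f (a + 1) - f a) (ρ γ : Perm (Fin n)) :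
    ∑ x, (f (ρ x) - f (numBelowBoth ρ γ x)) ≤ ∑ x, |f (ρ x) - f (γ x)| := by
  have hE (x : Fin n) : numBelowBoth 1 (γ * ρ⁻¹) (ρ x) = numBelowBoth ρ γ x := by
    rw [← mul_inv_cancel ρ, numBelowBoth_mul_right, Perm.coe_inv, symm_apply_apply]
  have h := sum_sub_numBelowBoth_one_le f hf hf' (γ * ρ⁻¹)
  rw [← Equiv.sum_comp ρ, ← Equiv.sum_comp ρ fun t => |f t - f ((γ * ρ⁻¹) t)|] at h
  simpa only [hE, Perm.mul_apply, Perm.coe_inv, symm_apply_apply] using h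

end Equiv.Perm

section Kendall

variable {n r : ℕ} {sel : Finset (Fin n) → Fin n} {S : Finset (Fin n)} {x : Fin n}

lemma fastSat_iff_sel_eq {π : Perm (Fin n)} (hsel : sel S ∈ S) (hx : x ∈ S)
    (hmax : ∀ u ∈ S, π u ≤ π x) : fastSat sel S π ↔ sel S = x := by
  refine ⟨fun h => by_contra fun hne => (hmax _ hsel).not_gt (h x hx (Ne.symm hne)), ?_⟩
  rintro rfl u hu hne
  exact (hmax u hu).lt_of_ne (π.injective.ne hne)

lemma exists_lt_of_not_fastSat_iff {ρ γ : Perm (Fin n)} (hsel : sel S ∈ S) (hx : x ∈ S)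
    (hmax : ∀ u ∈ S, ρ u ≤ ρ x) (hS : ¬(fastSat sel S ρ ↔ fastSat sel S γ)) :
    ∃ u ∈ S, γ x < γ u := by
  by_contra! h
  exact hS ((fastSat_iff_sel_eq hsel hx hmax).trans (fastSat_iff_sel_eq hsel hx h).symm)

lemma kendall_le_sum_choose_sub (hsel : ∀ S : Finset (Fin n), S.card = r → sel S ∈ S)
    (ρ γ : Perm (Fin n)) :
    kendall n r sel ρ γ ≤
      ∑ x, ((ρ x : ℕ).choose (r - 1) - (ρ.numBelowBoth γ x).choose (r - 1)) := by
  set B : Fin n → Finset (Finset (Fin n)) := fun x =>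
    (powersetCard (r - 1) {u | ρ u < ρ x} \ powersetCard (r - 1) {u | ρ u < ρ x ∧ γ u < γ x}).image
      (insert x)
  have hcover : {S : Finset (Fin n) | S.card = r ∧ ¬(fastSat sel S ρ ↔ fastSat sel S γ)} ⊆
      univ.biUnion B := by
    rintro S ⟨hcard, hS⟩
    have hne : S.Nonempty := nonempty_iff_ne_empty.2 fun h => hS (by simp [h, fastSat])
    obtain ⟨x, hx, hmax⟩ := S.exists_max_image ρ hne
    obtain ⟨u, hu, hxu⟩ := exists_lt_of_not_fastSat_iff (hsel S hcard) hx hmax hS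
    simp only [coe_biUnion, coe_univ, Set.mem_univ, Set.iUnion_true, Set.mem_iUnion, mem_coe,
      B, mem_image, mem_sdiff, mem_powersetCard]
    refine ⟨x, S.erase x, ⟨⟨fun v hv => ?_, by rw [card_erase_of_mem hx, hcard]⟩, fun h => ?_⟩,
      insert_erase hx⟩
    · obtain ⟨hvx, hv⟩ := mem_erase.1 hv
      simpa using (hmax v hv).lt_of_ne (ρ.injective.ne hvx)
    · have := h.1 (mem_erase.2 ⟨fun h => hxu.ne (h ▸ rfl), hu⟩)
      simp only [mem_filter] at this
      exact this.2.2.not_gt hxu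
  calc kendall n r sel ρ γ ≤ #(univ.biUnion B) :=
        (Set.ncard_le_ncard hcover (finite_toSet _)).trans_eq (Set.ncard_coe_finset _)
    _ ≤ ∑ x, #(B x) := card_biUnion_le
    _ ≤ _ := sum_le_sum fun x _ => card_image_le.trans_eq <| by
        rw [card_sdiff_of_subset (powersetCard_mono fun _ => by simp +contextual),
          card_powersetCard, card_powersetCard, Perm.card_filter_apply_lt]
        rfl

end Kendall

theorem sum_choose_diff_ge_kendall_general
    {n r : ℕ}
    (sel : Finset (Fin n) → Fin n)
    (hsel : ∀ S : Finset (Fin n), S.card = r → sel S ∈ S)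
    (ρ γ : Equiv.Perm (Fin n)) :
    (kendall n r sel ρ γ : ℤ) ≤
      ∑ v : Fin n, |((ρ v : ℕ).choose (r - 1) : ℤ) - ((γ v : ℕ).choose (r - 1) : ℤ)| := by
  calc (kendall n r sel ρ γ : ℤ)
      ≤ ∑ x, (((ρ x : ℕ).choose (r - 1) : ℤ) - (ρ.numBelowBoth γ x).choose (r - 1)) := by
        rw [← sum_congr rfl fun x _ =>
          Nat.cast_sub (Nat.choose_le_choose (r - 1) (ρ.numBelowBoth_le γ x)), ← Nat.cast_sum]
        exact_mod_cast kendall_le_sum_choose_sub hsel ρ γ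
    _ ≤ _ := Perm.sum_sub_numBelowBoth_le_sum_abs (fun a => (a.choose (r - 1) : ℤ))
        (Nat.mono_cast.comp (Nat.choose_mono (r - 1)))
        (Nat.monotone_choose_succ_sub (r - 1)) ρ γ

/-- For rankings `ρ, γ` of `Fin n` and `r ≥ 2`, in a dense `r`-FAST instance:
`Σ_v |C(ρ(v)−1, r−1) − C(γ(v)−1, r−1)| ≥ K(ρ, γ)` (0-based positions, so
`ρ(v)−1` is `(ρ v : ℕ)`). -/
theorem sum_choose_diff_ge_kendall
    {n r : ℕ} (hr : 2 ≤ r)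
    (sel : Finset (Fin n) → Fin n)
    (hsel : ∀ S : Finset (Fin n), S.card = r → sel S ∈ S)
    (ρ γ : Equiv.Perm (Fin n)) :
    (kendall n r sel ρ γ : ℤ) ≤
      ∑ v : Fin n, |((ρ v : ℕ).choose (r - 1) : ℤ) - ((γ v : ℕ).choose (r - 1) : ℤ)| :=
  sum_choose_diff_ge_kendall_general sel hsel ρ γ
end

section
/- The Inc-Degree algorithm, which orders the vertices of a dense r-Dense Feedback Arc Set instance by non-decreasing in-degree, is a 5-approximation: if σ_A is the ranking it produces and σ_O an optimal ranking, then b_{σ_A} ≤ 5 · b_{σ_O}, where b_ρ denotes the number of constraints inconsistent with ρ. -/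
namespace IncDegree

open Finset Equiv

variable {n : ℕ}

section Rearrangement

lemma min_eq_sum_ite_mul_ite {a b N : ℕ} (ha : a ≤ N) :
    min a b = ∑ t ∈ range N, (if t < a then 1 else 0) * (if t < b then 1 else 0) := by
  simp_rw [ite_zero_mul_ite_zero, mul_one, ← card_filter]
  rw [← card_range (min a b)]
  congr 1
  ext t
  simp only [mem_range, mem_filter, lt_min_iff]
  omega

lemma sum_min_le_of_sorted {F : ℕ → ℕ} (hF : Monotone F) {g : Fin n → ℕ}
    {σA : Perm (Fin n)} (hA : ∀ u v, σA u < σA v → g u ≤ g v) (σ : Perm (Fin n)) :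
    ∑ v, min (F (σ v)) (g v) ≤ ∑ v, min (F (σA v)) (g v) := by
  have hlayer : ∀ τ : Perm (Fin n), ∑ v, min (F (τ v)) (g v) = ∑ t ∈ range (F n),
      ∑ v, (if t < g v then 1 else 0) * (if t < F (τ v) then 1 else 0) := fun τ => by
    rw [sum_comm]
    refine sum_congr rfl fun v _ => ?_
    rw [min_eq_sum_ite_mul_ite (hF (τ v).isLt.le)]
    exact sum_congr rfl fun t _ => mul_comm _ _
  rw [hlayer, hlayer]
  refine sum_le_sum fun t _ => ?_
  have hmono : Monovary (fun v => if t < g v then 1 else 0)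
      (fun v => if t < F (σA v) then 1 else 0) := by
    intro u v huv
    simp only at huv
    have hu : ¬ t < F (σA u) := fun h => by rw [if_pos h] at huv; split_ifs at huv <;> omega
    have hv : t < F (σA v) := by_contra fun h => by rw [if_neg h] at huv; omega
    have hσ : σA u < σA v := lt_of_not_ge fun h => hu (hv.trans_le (hF h))
    by_cases ht : t < g u
    · simp [ht, ht.trans_le (hA u v hσ)]
    · simp [ht]
  simpa using hmono.sum_mul_comp_perm_le_sum_mul (σ := σ.trans σA.symm)

theorem sum_abs_sub_le_of_sorted {F : ℕ → ℕ} (hF : Monotone F) {g : Fin n → ℕ}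
    {σA : Perm (Fin n)} (hA : ∀ u v, σA u < σA v → g u ≤ g v) (σ : Perm (Fin n)) :
    ∑ v, |(F (σA v) : ℤ) - g v| ≤ ∑ v, |(F (σ v) : ℤ) - g v| := by
  have habs : ∀ τ : Perm (Fin n), ∑ v, |(F (τ v) : ℤ) - g v| =
      ∑ x : Fin n, (F x : ℤ) + ∑ v, (g v : ℤ) - 2 * ∑ v, ((min (F (τ v)) (g v) : ℕ) : ℤ) :=
      fun τ => by
    rw [← Equiv.sum_comp τ fun x : Fin n => (F x : ℤ), mul_sum, ← sum_add_distrib,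
      ← sum_sub_distrib]
    refine sum_congr rfl fun v _ => ?_
    rw [← max_sub_min_eq_abs, Nat.cast_min]
    have := min_add_max (g v : ℤ) (F (τ v))
    rw [min_comm] at this ⊢
    linarith
  rw [habs, habs]
  have := sum_min_le_of_sorted hF hA σ
  push_cast at this ⊢
  linarith

end Rearrangement

section DiaconisGraham

lemma card_filter_apply_lt (π : Perm (Fin n)) (c : Fin n) : #{y | π y < c} = c := by
  rw [card_equiv π (t := {y | y < c}) (by simp), filter_gt_eq_Iio, Fin.card_Iio]

def concordCount (π : Perm (Fin n)) (x : Fin n) : ℕ := #{y | y < x ∧ π y < π x}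

lemma concordCount_le_self (π : Perm (Fin n)) (x : Fin n) : concordCount π x ≤ x := by
  rw [← Fin.card_Iio, ← filter_gt_eq_Iio]
  exact card_le_card (monotone_filter_right _ fun _ _ h => h.1)

lemma concordCount_le_apply (π : Perm (Fin n)) (x : Fin n) : concordCount π x ≤ π x := by
  rw [← card_filter_apply_lt π (π x)]
  exact card_le_card (monotone_filter_right _ fun _ _ h => h.2)

lemma concordCount_one (x : Fin n) : concordCount 1 x = x := by
  rw [concordCount, ← Fin.card_Iio, ← filter_gt_eq_Iio]
  simp

/-- For `f k = k.choose r` this counts the `(r + 1)`-subsets of `Fin n` whose largest element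
is not the one of largest `π`-value. -/
def kendall (f : ℕ → ℤ) (π : Perm (Fin n)) : ℤ :=
  ∑ x : Fin n, (f x - f (concordCount π x))

def footrule (f : ℕ → ℤ) (π : Perm (Fin n)) : ℤ := ∑ x : Fin n, |f (π x) - f x|

lemma sum_increment_le_of_injOn {ι : Type*} {s : Finset ι} {f : ℕ → ℤ} (hf : Monotone f)
    (hf' : Monotone fun k => f (k + 1) - f k) {g h : ι → ℕ} {a b : ℕ} (hab : a ≤ b)
    (hg : Set.InjOn g s) (hgs : ∀ x ∈ s, a ≤ g x ∧ g x < b)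
    (hhg : ∀ x ∈ s, h x ≤ g x) :
    ∑ x ∈ s, (f (h x + 1) - f (h x)) ≤ f b - f a := calc
  _ ≤ ∑ x ∈ s, (f (g x + 1) - f (g x)) := sum_le_sum fun x hx => hf' (hhg x hx)
  _ = ∑ p ∈ s.image g, (f (p + 1) - f p) := (sum_image (f := fun p => f (p + 1) - f p) hg).symm
  _ ≤ ∑ p ∈ Ico a b, (f (p + 1) - f p) :=
    sum_le_sum_of_subset_of_nonneg
      (fun p hp => by obtain ⟨x, hx, rfl⟩ := mem_image.1 hp; exact mem_Ico.2 (hgs x hx))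
      fun p _ _ => sub_nonneg.2 (hf p.le_succ)
  _ = f b - f a := sum_Ico_sub f hab

section InductionStep

variable {π : Perm (Fin n)} {j : Fin n}

lemma apply_le_iff (htop : ∀ x, j < x → π x = x) (y : Fin n) : π y ≤ j ↔ y ≤ j := by
  constructor
  · intro h
    by_contra! hy
    exact (htop y hy ▸ hy).not_ge h
  · intro hy
    by_contra! h
    have := π.injective (htop _ h)
    exact (this ▸ h).not_ge hy

lemma apply_lt_iff (htop : ∀ x, j < x → π x = x) (y : Fin n) :
    π y < j ↔ y ≤ j ∧ y ≠ π.symm j := by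
  rw [lt_iff_le_and_ne, apply_le_iff htop, Ne, Ne, π.eq_symm_apply]

lemma symm_apply_lt (htop : ∀ x, j < x → π x = x) (hj : π j ≠ j) : π.symm j < j := by
  refine lt_of_le_of_ne ((apply_le_iff htop _).1 (by simp)) fun h => hj ?_
  conv_lhs => rw [← h]
  simp

lemma apply_lt_self (htop : ∀ x, j < x → π x = x) (hj : π j ≠ j) : π j < j :=
  lt_of_le_of_ne ((apply_le_iff htop _).2 le_rfl) hj

lemma mul_swap_apply_of_le (htop : ∀ x, j < x → π x = x) (hj : π j ≠ j) {x : Fin n}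
    (hx : j ≤ x) : (π * swap (π.symm j) j) x = x := by
  obtain rfl | hx := hx.eq_or_lt
  · simp
  · rw [Perm.mul_apply, swap_apply_of_ne_of_ne ((symm_apply_lt htop hj).trans hx).ne' hx.ne',
      htop x hx]

lemma concordCount_symm_apply (htop : ∀ x, j < x → π x = x) (hj : π j ≠ j) :
    concordCount π (π.symm j) = π.symm j := by
  rw [concordCount, ← Fin.card_Iio, ← filter_gt_eq_Iio]
  congr 1
  ext y
  simp only [mem_filter, mem_univ, true_and, apply_symm_apply, and_iff_left_iff_imp]
  intro hy
  exact (apply_lt_iff htop y).2 ⟨(hy.trans (symm_apply_lt htop hj)).le, hy.ne⟩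

lemma concordCount_self (htop : ∀ x, j < x → π x = x) (hj : π j ≠ j) :
    concordCount π j = π j := by
  rw [concordCount, ← card_filter_apply_lt π (π j)]
  congr 1
  ext y
  simp only [mem_filter, mem_univ, true_and, and_iff_right_iff_imp]
  intro hy
  have := ((apply_lt_iff htop y).1 (hy.trans (apply_lt_self htop hj))).1
  exact this.lt_of_ne (by rintro rfl; exact hy.false)

lemma concordCount_mul_swap_self (htop : ∀ x, j < x → π x = x) (hj : π j ≠ j) :
    concordCount (π * swap (π.symm j) j) j = j := by
  rw [concordCount, ← Fin.card_Iio, ← filter_gt_eq_Iio, mul_swap_apply_of_le htop hj le_rfl]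
  congr 1
  ext y
  simp only [mem_filter, mem_univ, true_and, and_iff_left_iff_imp]
  intro hy
  by_cases hyz : y = π.symm j
  · simpa [hyz] using apply_lt_self htop hj
  · rw [Perm.mul_apply, swap_apply_of_ne_of_ne hyz hy.ne]
    exact (apply_lt_iff htop y).2 ⟨hy.le, hyz⟩

lemma concordCount_mul_swap_le (htop : ∀ x, j < x → π x = x) (hj : π j ≠ j) {x : Fin n}
    (hxz : x ≠ π.symm j) (hxj : x ≠ j) :
    concordCount (π * swap (π.symm j) j) x ≤
      concordCount π x + if π.symm j < x ∧ x < j ∧ π j < π x then 1 else 0 := by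
  set z := π.symm j
  have hπ'x : (π * swap z j) x = π x := by rw [Perm.mul_apply, swap_apply_of_ne_of_ne hxz hxj]
  have hsub : ({y | y < x ∧ (π * swap z j) y < (π * swap z j) x} : Finset (Fin n)) ⊆
      insert z ({y | y < x ∧ π y < π x} : Finset (Fin n)) := by
    intro y
    simp only [mem_filter, mem_univ, true_and, mem_insert, hπ'x]
    rintro ⟨hyx, hy⟩
    by_cases hyz : y = z
    · exact Or.inl hyz
    by_cases hyj : y = j
    · subst hyj
      simp only [Perm.mul_apply, swap_apply_right, z, apply_symm_apply] at hy
      exact Or.inr ⟨hyx, (apply_lt_self htop hj).trans hy⟩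
    · rw [Perm.mul_apply, swap_apply_of_ne_of_ne hyz hyj] at hy
      exact Or.inr ⟨hyx, hy⟩
  rw [concordCount, concordCount]
  split_ifs with hsel
  · exact (card_le_card hsub).trans (card_insert_le _ _)
  · rw [add_zero]
    refine card_le_card fun y hy => ?_
    obtain rfl | hy' := mem_insert.1 (hsub hy)
    · simp only [mem_filter, mem_univ, true_and, hπ'x] at hy ⊢
      have hxj' : j < x := by
        by_contra! hxj'
        exact hsel ⟨hy.1, hxj'.lt_of_ne hxj, by simpa [z] using hy.2⟩
      refine ⟨hy.1, ?_⟩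
      rw [htop x hxj']
      simpa [z] using hxj'
    · exact hy'

lemma concordCount_add_one_le (htop : ∀ x, j < x → π x = x) {x : Fin n}
    (hzx : π.symm j < x) (hxj : x < j) : concordCount π x + 1 ≤ x := by
  have hsub : ({y | y < x ∧ π y < π x} : Finset (Fin n)) ⊆ (Iio x).erase (π.symm j) := by
    intro y
    simp only [mem_filter, mem_univ, true_and, mem_erase, mem_Iio]
    rintro ⟨hyx, hy⟩
    refine ⟨?_, hyx⟩
    rintro rfl
    rw [apply_symm_apply] at hy
    exact ((apply_lt_iff htop x).2 ⟨hxj.le, hzx.ne'⟩).not_gt hy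
  have := card_le_card hsub
  rw [card_erase_of_mem (mem_Iio.2 hzx), Fin.card_Iio] at this
  have : 0 < (x : ℕ) := lt_of_le_of_lt (Nat.zero_le _) hzx
  rw [concordCount]
  omega

lemma sum_increment_concordCount_le {f : ℕ → ℤ} (hf : Monotone f)
    (hf' : Monotone fun k => f (k + 1) - f k) (htop : ∀ x, j < x → π x = x) (hj : π j ≠ j) :
    ∑ x with π.symm j < x ∧ x < j ∧ π j < π x,
        (f (concordCount π x + 1) - f (concordCount π x)) ≤
      f j - max (f (π.symm j)) (f (π j)) := by
  have hlt : ∀ x, π.symm j < x → x < j → π x < j := fun x hzx hxj =>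
    (apply_lt_iff htop x).2 ⟨hxj.le, hzx.ne'⟩
  rcases le_total (π.symm j) (π j) with h | h
  · rw [max_eq_right (hf h)]
    refine sum_increment_le_of_injOn hf hf' (g := fun x => π x)
      (apply_lt_self htop hj).le (fun x _ y _ hxy => π.injective (Fin.val_injective hxy))
      (fun x hx => ?_) fun x _ => concordCount_le_apply π x
    simp only [mem_filter, mem_univ, true_and] at hx
    exact ⟨hx.2.2.le, hlt x hx.1 hx.2.1⟩
  · rw [max_eq_left (hf h)]
    refine sum_increment_le_of_injOn hf hf' (g := fun x : Fin n => (x : ℕ) - 1)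
      (symm_apply_lt htop hj).le (fun x hx y hy hxy => ?_) (fun x hx => ?_) fun x hx => ?_
      <;> simp only [coe_filter, Set.mem_ofPred_eq, mem_filter, mem_univ, true_and] at hx
    · simp only [coe_filter, Set.mem_ofPred_eq, mem_univ, true_and] at hy
      have := Fin.lt_def.1 hx.1
      have := Fin.lt_def.1 hy.1
      simp only at hxy
      exact Fin.val_injective (by omega)
    · have := Fin.lt_def.1 hx.1
      have := Fin.lt_def.1 hx.2.1
      omega
    · have := concordCount_add_one_le htop hx.1 hx.2.1
      omega

lemma kendall_sub_kendall_mul_swap_le {f : ℕ → ℤ} (hf : Monotone f)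
    (htop : ∀ x, j < x → π x = x) (hj : π j ≠ j) :
    kendall f π - kendall f (π * swap (π.symm j) j) ≤
      ∑ x with π.symm j < x ∧ x < j ∧ π j < π x,
          (f (concordCount π x + 1) - f (concordCount π x)) +
        (f (concordCount (π * swap (π.symm j) j) (π.symm j)) - f (π.symm j)) +
        (f j - f (π j)) := by
  set z := π.symm j
  set π' := π * swap z j
  have hzj : z < j := symm_apply_lt htop hj
  have hmz : concordCount π z = z := concordCount_symm_apply htop hj
  have hmj : concordCount π j = π j := concordCount_self htop hj
  have hm'j : concordCount π' j = j := concordCount_mul_swap_self htop hj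
  have hpt : ∀ x, f (concordCount π' x) - f (concordCount π x) ≤
      ((if z < x ∧ x < j ∧ π j < π x then f (concordCount π x + 1) - f (concordCount π x)
        else 0) + if x = z then f (concordCount π' z) - f z else 0) +
        if x = j then f j - f (π j) else 0 := by
    intro x
    by_cases hxz : x = z
    · simp [hxz, hzj.ne, hmz]
    by_cases hxj : x = j
    · simp [hxj, hzj.ne', hmj, hm'j]
    have hle : concordCount π' x ≤ _ := concordCount_mul_swap_le htop hj hxz hxj
    simp only [if_neg hxz, if_neg hxj, add_zero] at hle ⊢
    split_ifs at hle ⊢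
    · linarith [hf hle]
    · linarith [hf (le_of_le_of_eq hle (add_zero _))]
  calc _ = ∑ x, (f (concordCount π' x) - f (concordCount π x)) := by
        rw [kendall, kendall, ← sum_sub_distrib]
        exact sum_congr rfl fun x _ => by ring
    _ ≤ _ := sum_le_sum fun x _ => hpt x
    _ = _ := by
        rw [sum_add_distrib, sum_add_distrib, sum_filter, sum_ite_eq', sum_ite_eq']
        simp

lemma footrule_sub_footrule_mul_swap (f : ℕ → ℤ) (htop : ∀ x, j < x → π x = x)
    (hj : π j ≠ j) :
    footrule f π - footrule f (π * swap (π.symm j) j) =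
      |f j - f (π.symm j)| - |f (π j) - f (π.symm j)| + |f (π j) - f j| := by
  rw [footrule, footrule, ← sum_sub_distrib,
    Fintype.sum_eq_add (π.symm j) j (symm_apply_lt htop hj).ne fun x hx => ?_]
  · simp
  · rw [Perm.mul_apply, swap_apply_of_ne_of_ne hx.1 hx.2, sub_self]

lemma kendall_sub_le_footrule_sub {f : ℕ → ℤ} (hf : Monotone f)
    (hf' : Monotone fun k => f (k + 1) - f k) (htop : ∀ x, j < x → π x = x) (hj : π j ≠ j) :
    kendall f π - kendall f (π * swap (π.symm j) j) ≤
      footrule f π - footrule f (π * swap (π.symm j) j) := by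
  have hK := kendall_sub_kendall_mul_swap_le hf htop hj
  have hS := sum_increment_concordCount_le hf hf' htop hj
  have hF := footrule_sub_footrule_mul_swap f htop hj
  set z := π.symm j
  set π' := π * swap z j
  have hm : f (concordCount π' z) ≤ min (f z) (f (π j)) :=
    le_min (hf (concordCount_le_self π' z))
      (by simpa [π'] using hf (concordCount_le_apply π' z))
  have ha := hf (apply_lt_self htop hj).le
  have hb : f z ≤ f j := hf (symm_apply_lt htop hj).le
  rw [hF, abs_of_nonneg (sub_nonneg.2 hb),
    abs_of_nonpos (sub_nonpos.2 ha), abs_sub_comm, ← max_sub_min_eq_abs]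
  omega

end InductionStep

theorem kendall_le_footrule {f : ℕ → ℤ} (hf : Monotone f)
    (hf' : Monotone fun k => f (k + 1) - f k) (π : Perm (Fin n)) :
    kendall f π ≤ footrule f π := by
  -- Induction on a bound `k` for the points moved by `π`; if `π` moves `j = k`, composing with
  -- the transposition of `π⁻¹ j` and `j` fixes `j`.
  suffices ∀ k : ℕ, ∀ π : Perm (Fin n), (∀ x : Fin n, k ≤ x → π x = x) →
      kendall f π ≤ footrule f π from this n π fun x hx => absurd x.isLt hx.not_gt
  intro k
  induction k with
  | zero =>
    intro π hπ
    obtain rfl : π = 1 := Equiv.ext fun x => hπ x (Nat.zero_le _)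
    simp [kendall, footrule, concordCount_one]
  | succ k ih =>
    intro π hπ
    rcases lt_or_ge k n with hk | hk
    swap
    · exact ih π fun x hx => absurd (x.isLt.trans_le hk) hx.not_gt
    set j : Fin n := ⟨k, hk⟩
    have htop : ∀ x, j < x → π x = x := fun x hx => hπ x hx
    by_cases hj : π j = j
    · refine ih π fun x hx => ?_
      obtain h | h := (show j ≤ x from hx).eq_or_lt
      · exact h ▸ hj
      · exact htop x h
    · have := ih _ fun x hx => mul_swap_apply_of_le htop hj (show j ≤ x from hx)
      linarith [kendall_sub_le_footrule_sub hf hf' htop hj]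

lemma monotone_choose_succ_sub (k : ℕ) :
    Monotone fun t : ℕ => ((t + 1).choose k : ℤ) - t.choose k := by
  cases k with
  | zero => simp [Monotone]
  | succ k =>
    intro a b h
    simp only [Nat.choose_succ_succ', Nat.cast_add, add_sub_cancel_right]
    exact_mod_cast Nat.choose_mono k h

lemma sum_sub_concord_le_footrule {f : ℕ → ℤ} (hf : Monotone f)
    (hf' : Monotone fun k => f (k + 1) - f k) (γ ρ : Perm (Fin n)) :
    ∑ v, (f (γ v) - f #{u | γ u < γ v ∧ ρ u < ρ v}) ≤ ∑ v, |f (ρ v) - f (γ v)| := by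
  set π := γ.symm.trans ρ
  calc _ = kendall f π := by
        rw [kendall, ← Equiv.sum_comp γ fun x => f x - f (concordCount π x)]
        refine sum_congr rfl fun v _ => ?_
        rw [concordCount, card_equiv γ (t := {y | y < γ v ∧ π y < π (γ v)}) (by simp [π])]
    _ ≤ footrule f π := kendall_le_footrule hf hf' π
    _ = _ := by
        rw [footrule, ← Equiv.sum_comp γ fun x => |f (π x) - f x|]
        simp [π]

end DiaconisGraham

section LastElement

lemma card_filter_mem_erase_subset {α : Type*} [Fintype α] [DecidableEq α] {v : α}
    {P : Finset α} (hv : v ∉ P) (k : ℕ) :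
    #{S ∈ powersetCard (k + 1) univ | v ∈ S ∧ S.erase v ⊆ P} = (#P).choose k := by
  have himage :
      ({S ∈ powersetCard (k + 1) univ | v ∈ S ∧ S.erase v ⊆ P} : Finset (Finset α)) =
        (powersetCard k P).image (insert v) := by
    ext S
    simp only [mem_filter, mem_image, mem_powersetCard, subset_univ, true_and]
    constructor
    · rintro ⟨hS, hvS, hSP⟩
      exact ⟨S.erase v, ⟨hSP, by rw [card_erase_of_mem hvS, hS, Nat.add_sub_cancel]⟩,
        insert_erase hvS⟩
    · rintro ⟨T, ⟨hTP, hT⟩, rfl⟩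
      have hvT : v ∉ T := fun h => hv (hTP h)
      exact ⟨by rw [card_insert_of_notMem hvT, hT], mem_insert_self v T,
        (erase_insert hvT).symm ▸ hTP⟩
  rw [himage, card_image_of_injOn, card_powersetCard]
  intro T₁ hT₁ T₂ hT₂ h
  have hv₁ : v ∉ T₁ := fun h' => hv ((mem_powersetCard.1 hT₁).1 h')
  have hv₂ : v ∉ T₂ := fun h' => hv ((mem_powersetCard.1 hT₂).1 h')
  rw [← erase_insert hv₁, ← erase_insert hv₂]
  exact congrArg (·.erase v) h

def IsLast (ρ : Perm (Fin n)) (S : Finset (Fin n)) (v : Fin n) : Prop :=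
  v ∈ S ∧ ∀ u ∈ S, ρ u ≤ ρ v

instance (ρ : Perm (Fin n)) (S : Finset (Fin n)) (v : Fin n) : Decidable (IsLast ρ S v) :=
  inferInstanceAs (Decidable (_ ∧ _))

variable {S : Finset (Fin n)} {v : Fin n}

lemma IsLast.eq {ρ : Perm (Fin n)} {w : Fin n} (hv : IsLast ρ S v) (hw : IsLast ρ S w) : v = w :=
  ρ.injective (le_antisymm (hw.2 v hv.1) (hv.2 w hw.1))

lemma exists_isLast (ρ : Perm (Fin n)) (hS : S.Nonempty) : ∃ v, IsLast ρ S v := by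
  obtain ⟨v, hv, h⟩ := S.exists_max_image ρ hS
  exact ⟨v, hv, h⟩

lemma isLast_iff_erase_subset {ρ : Perm (Fin n)} :
    IsLast ρ S v ↔ v ∈ S ∧ S.erase v ⊆ ({u | ρ u < ρ v} : Finset (Fin n)) := by
  simp only [IsLast, subset_iff, mem_erase, mem_filter, mem_univ, true_and, and_imp]
  refine and_congr_right fun _ => forall_congr' fun u => ?_
  rw [le_iff_lt_or_eq, ρ.injective.eq_iff]
  tauto

lemma card_filter_isLast (ρ : Perm (Fin n)) (v : Fin n) (k : ℕ) :
    #{S ∈ powersetCard (k + 1) univ | IsLast ρ S v} = (ρ v : ℕ).choose k := by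
  rw [filter_congr fun S _ => isLast_iff_erase_subset, card_filter_mem_erase_subset (by simp),
    card_filter_apply_lt]

lemma card_filter_isLast_and_isLast (γ ρ : Perm (Fin n)) (v : Fin n) (k : ℕ) :
    #{S ∈ powersetCard (k + 1) univ | IsLast γ S v ∧ IsLast ρ S v} =
      (#{u | γ u < γ v ∧ ρ u < ρ v}).choose k := by
  rw [← card_filter_mem_erase_subset (v := v) (P := {u | γ u < γ v ∧ ρ u < ρ v}) (by simp)]
  congr 1
  refine filter_congr fun S _ => ?_
  rw [isLast_iff_erase_subset, isLast_iff_erase_subset, filter_and, subset_inter_iff]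
  tauto

lemma sum_card_filter_isLast (ρ : Perm (Fin n)) {s : Finset (Finset (Fin n))}
    (hs : ∀ S ∈ s, S.Nonempty) : ∑ v, #{S ∈ s | IsLast ρ S v} = #s := by
  simp_rw [card_filter]
  rw [sum_comm, card_eq_sum_ones]
  refine sum_congr rfl fun S hS => ?_
  obtain ⟨w, hw⟩ := exists_isLast ρ (hs S hS)
  rw [Fintype.sum_eq_single w fun v hv => if_neg fun h => hv (h.eq hw), if_pos hw]

end LastElement

section FAST

lemma card_filter_and_add_card_filter_and_not {α : Type*} (s : Finset α) (p q : α → Prop)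
    [DecidablePred p] [DecidablePred q] :
    #{x ∈ s | p x ∧ q x} + #{x ∈ s | p x ∧ ¬ q x} = #{x ∈ s | p x} := by
  rw [← filter_filter, ← filter_filter, card_filter_add_card_filter_not]

variable {r k : ℕ} (sel : Finset (Fin n) → Fin n)

lemma fastSat_iff_isLast {ρ : Perm (Fin n)} {S : Finset (Fin n)} (hS : sel S ∈ S) :
    fastSat sel S ρ ↔ IsLast ρ S (sel S) := by
  refine ⟨fun h => ⟨hS, fun u hu => ?_⟩,
    fun h u hu hne => (h.2 u hu).lt_of_ne (ρ.injective.ne hne)⟩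
  by_cases hne : u = sel S
  · rw [hne]
  · exact (h u hu hne).le

lemma badCount_eq_card (hsel : ∀ S : Finset (Fin n), S.card = r → sel S ∈ S)
    (ρ : Perm (Fin n)) :
    badCount n r sel ρ = #{S ∈ powersetCard r univ | ¬ IsLast ρ S (sel S)} := by
  rw [badCount, ← Set.ncard_coe_finset]
  congr 1
  ext S
  simp only [Set.mem_ofPred_eq, coe_filter, mem_powersetCard_univ]
  exact and_congr_right fun hS => not_congr (fastSat_iff_isLast sel (hsel S hS))

lemma inDeg_eq_card (v : Fin n) : inDeg n r sel v = #{S ∈ powersetCard r univ | sel S = v} := by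
  rw [inDeg, ← Set.ncard_coe_finset]
  congr 1
  ext S
  simp

lemma badCount_eq_sum_sel (hsel : ∀ S : Finset (Fin n), S.card = r → sel S ∈ S)
    (ρ : Perm (Fin n)) :
    badCount n r sel ρ = ∑ v, #{S ∈ powersetCard r univ | sel S = v ∧ ¬ IsLast ρ S v} := by
  rw [badCount_eq_card sel hsel, card_eq_sum_card_fiberwise (f := sel) (t := univ) (by simp)]
  refine sum_congr rfl fun v _ => ?_
  rw [filter_filter]
  refine congrArg card (filter_congr fun S _ => ?_)
  constructor
  · rintro ⟨h, rfl⟩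
    exact ⟨rfl, h⟩
  · rintro ⟨rfl, h⟩
    exact ⟨h, rfl⟩

lemma badCount_eq_sum_isLast (hsel : ∀ S : Finset (Fin n), S.card = k + 1 → sel S ∈ S)
    (ρ : Perm (Fin n)) :
    badCount n (k + 1) sel ρ =
      ∑ v, #{S ∈ powersetCard (k + 1) univ | IsLast ρ S v ∧ sel S ≠ v} := by
  rw [badCount_eq_card sel hsel, ← sum_card_filter_isLast ρ fun S hS => ?_]
  · refine sum_congr rfl fun v _ => ?_
    rw [filter_filter]
    refine congrArg card (filter_congr fun S _ => ?_)
    constructor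
    · rintro ⟨hbad, hv⟩
      exact ⟨hv, fun h => hbad (h ▸ hv)⟩
    · rintro ⟨hv, hsv⟩
      exact ⟨fun h => hsv (h.eq hv), hv⟩
  · rw [← card_pos, (mem_powersetCard_univ.1 (mem_filter.1 hS).1)]
    exact k.succ_pos

theorem sum_abs_choose_sub_inDeg_le (hsel : ∀ S : Finset (Fin n), S.card = k + 1 → sel S ∈ S)
    (ρ : Perm (Fin n)) :
    ∑ v, |((ρ v : ℕ).choose k : ℤ) - inDeg n (k + 1) sel v| ≤
      2 * badCount n (k + 1) sel ρ := by
  set 𝒮 := powersetCard (k + 1) (univ : Finset (Fin n))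
  have hpt : ∀ v, |((ρ v : ℕ).choose k : ℤ) - inDeg n (k + 1) sel v| ≤
      #{S ∈ 𝒮 | sel S = v ∧ ¬ IsLast ρ S v} + #{S ∈ 𝒮 | IsLast ρ S v ∧ sel S ≠ v} :=
      fun v => by
    have hIn := card_filter_and_add_card_filter_and_not 𝒮 (sel · = v) (IsLast ρ · v)
    have hl := card_filter_and_add_card_filter_and_not 𝒮 (IsLast ρ · v) (sel · = v)
    rw [← inDeg_eq_card] at hIn
    rw [card_filter_isLast, filter_congr fun S _ => and_comm] at hl
    rw [← hIn, ← hl]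
    push_cast
    rw [abs_le]
    constructor <;> linarith
  calc _ ≤ ∑ v, ((#{S ∈ 𝒮 | sel S = v ∧ ¬ IsLast ρ S v} : ℤ) +
        #{S ∈ 𝒮 | IsLast ρ S v ∧ sel S ≠ v}) := sum_le_sum fun v _ => hpt v
    _ = _ := by
      rw [sum_add_distrib, two_mul]
      nth_rewrite 1 [badCount_eq_sum_sel sel hsel ρ]
      rw [badCount_eq_sum_isLast sel hsel ρ]
      push_cast
      rfl

theorem badCount_le_add_sum_abs (hsel : ∀ S : Finset (Fin n), S.card = k + 1 → sel S ∈ S)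
    (ρ γ : Perm (Fin n)) :
    (badCount n (k + 1) sel ρ : ℤ) ≤ badCount n (k + 1) sel γ +
      ∑ v, |((ρ v : ℕ).choose k : ℤ) - (γ v : ℕ).choose k| := by
  set 𝒮 := powersetCard (k + 1) (univ : Finset (Fin n))
  have hpt : ∀ v, #{S ∈ 𝒮 | sel S = v ∧ ¬ IsLast ρ S v} ≤
      #{S ∈ 𝒮 | sel S = v ∧ ¬ IsLast γ S v} +
        #{S ∈ 𝒮 | IsLast γ S v ∧ ¬ IsLast ρ S v} := by
    intro v
    refine (card_le_card fun S hS => ?_).trans (card_union_le _ _)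
    simp only [mem_filter, mem_union] at hS ⊢
    tauto
  have hsplit : ∀ v, (#{S ∈ 𝒮 | IsLast γ S v ∧ ¬ IsLast ρ S v} : ℤ) =
      (γ v : ℕ).choose k - (#{u | γ u < γ v ∧ ρ u < ρ v}).choose k := fun v => by
    rw [← card_filter_isLast, ← card_filter_isLast_and_isLast,
      ← card_filter_and_add_card_filter_and_not 𝒮 (IsLast γ · v) (IsLast ρ · v)]
    push_cast
    ring
  calc (badCount n (k + 1) sel ρ : ℤ)
      ≤ ∑ v, ((#{S ∈ 𝒮 | sel S = v ∧ ¬ IsLast γ S v} : ℤ) +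
          ((γ v : ℕ).choose k - (#{u | γ u < γ v ∧ ρ u < ρ v}).choose k)) := by
        rw [badCount_eq_sum_sel sel hsel]
        push_cast
        exact sum_le_sum fun v _ => by rw [← hsplit]; exact_mod_cast hpt v
    _ ≤ _ := by
        rw [sum_add_distrib, badCount_eq_sum_sel sel hsel]
        push_cast
        exact add_le_add_right (sum_sub_concord_le_footrule (f := fun t => (t.choose k : ℤ))
          (fun a b h => Int.ofNat_le.2 (Nat.choose_mono k h)) (monotone_choose_succ_sub k) γ ρ) _

end FAST

end IncDegree

theorem incdegree_five_approx_general
    {n r : ℕ} (hr : 2 ≤ r)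
    (sel : Finset (Fin n) → Fin n)
    (hsel : ∀ S : Finset (Fin n), S.card = r → sel S ∈ S)
    (σA : Equiv.Perm (Fin n))
    (hA : ∀ u v : Fin n, σA u < σA v → inDeg n r sel u ≤ inDeg n r sel v)
    (σO : Equiv.Perm (Fin n)) :
    badCount n r sel σA ≤ 5 * badCount n r sel σO := by
  obtain ⟨k, rfl⟩ : ∃ k, r = k + 1 := ⟨r - 1, by omega⟩
  have hAO := IncDegree.badCount_le_add_sum_abs sel hsel σA σO
  have hO := IncDegree.sum_abs_choose_sub_inDeg_le sel hsel σO
  have hsorted := IncDegree.sum_abs_sub_le_of_sorted (Nat.choose_mono k) hA σO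
  have htri : ∑ v, |((σA v : ℕ).choose k : ℤ) - (σO v : ℕ).choose k| ≤
      ∑ v, |((σA v : ℕ).choose k : ℤ) - inDeg n (k + 1) sel v| +
        ∑ v, |((σO v : ℕ).choose k : ℤ) - inDeg n (k + 1) sel v| := by
    rw [← Finset.sum_add_distrib]
    exact Finset.sum_le_sum fun v _ =>
      (abs_sub_le _ (inDeg n (k + 1) sel v : ℤ) _).trans_eq (congrArg _ (abs_sub_comm _ _))
  have : (badCount n (k + 1) sel σA : ℤ) ≤ 5 * badCount n (k + 1) sel σO := by linarith
  exact_mod_cast this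

/-- The Inc-Degree algorithm is a 5-approximation for dense `r`-FAST: if `σA` orders the
vertices by non-decreasing in-degree and `σO` is an optimal ranking, then
`b_{σA} ≤ 5 · b_{σO}`. -/
theorem incdegree_five_approx
    {n r : ℕ} (hr : 2 ≤ r)
    (sel : Finset (Fin n) → Fin n)
    (hsel : ∀ S : Finset (Fin n), S.card = r → sel S ∈ S)
    (σA : Equiv.Perm (Fin n))
    (hA : ∀ u v : Fin n, σA u < σA v → inDeg n r sel u ≤ inDeg n r sel v)
    (σO : Equiv.Perm (Fin n))
    (hO : ∀ ρ : Equiv.Perm (Fin n), badCount n r sel σO ≤ badCount n r sel ρ) :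
    badCount n r sel σA ≤ 5 * badCount n r sel σO :=
  incdegree_five_approx_general hr sel hsel σA hA σO
end
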